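/- The operators {R(σ) : σ ∈ S_t} permuting tensor factors of (ℂ^d)^{⊗t} are linearly independent whenever d ≥ t. -/
import Mathlib


open Matrix

/-- The representation of `S_t` permuting the tensor factors of `(ℂ^d)^{⊗t}`. -/
def permMatrix (d t : ℕ) (σ : Equiv.Perm (Fin t)) :
    Matrix (Fin t → Fin d) (Fin t → Fin d) ℂ :=
  fun β α => if β = α ∘ σ.symm then 1 else 0

/-- The tensor-factor-permuting operators `{R(σ) : σ ∈ S_t}` on `(ℂ^d)^{⊗t}`
are linearly independent whenever `d ≥ t`. -/
theorem permMatrix_linearIndependent (d t : ℕ) (h : t ≤ d) :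
    LinearIndependent ℂ (fun σ : Equiv.Perm (Fin t) => permMatrix d t σ) := by
  rw [Fintype.linearIndependent_iff]
  intro g hg τ
  have key := congrFun (congrFun hg ((Fin.castLE h) ∘ τ.symm)) (Fin.castLE h)
  have hinj : Function.Injective (Fin.castLE h) := Fin.castLE_injective h
  have hcond : ∀ σ : Equiv.Perm (Fin t),
      ((Fin.castLE h) ∘ τ.symm = (Fin.castLE h) ∘ σ.symm) ↔ σ = τ := by
    intro σ
    constructor
    · intro hc
      refine Equiv.ext fun y => ?_
      have hx := hinj (congrFun hc (τ y))
      simp only [Function.comp_apply, Equiv.symm_apply_apply] at hx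
      exact ((Equiv.symm_apply_eq σ).mp hx.symm).symm
    · rintro rfl; rfl
  simp only [Matrix.sum_apply, Pi.smul_apply, permMatrix, smul_eq_mul, mul_ite, mul_one,
    mul_zero, Pi.zero_apply, Matrix.smul_apply, Matrix.zero_apply, hcond,
    Finset.sum_ite_eq' Finset.univ τ g, Finset.mem_univ, if_true] at key
  exact key
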